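/- arXiv:2603.14895 — 2 statements merged into one kernel-verified Lean document; each statement's English description precedes it below -/
import Mathlib

section
/- Let w_1,...,w_N be positive weights with maximum w_max, prefix sums C_i, total W, and define the partition of index i as q(i) = ⌈d·C_i/W⌉ for an integer d ≥ 1. Then for each partition index q ∈ {1,...,d}, the total weight of items assigned to partition q satisfies |Σ_{i : q(i)=q} w_i − W/d| < 2·w_max. -/
open Finset

/-- Load balance: the total weight assigned to each partition `q` deviates
from the ideal average `W/d` by strictly less than `2 * wmax`. -/
theorem prefix_sum_partition_load_balance
    (N d : ℕ) (hN : 0 < N) (hd : 0 < d) (w : ℕ → ℝ)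
    (hw : ∀ j ∈ Icc 1 N, 0 < w j)
    (wmax : ℝ) (hmax : ∀ j ∈ Icc 1 N, w j ≤ wmax)
    (hmem : ∃ j ∈ Icc 1 N, w j = wmax)
    (C : ℕ → ℝ) (hC : ∀ i, C i = ∑ n ∈ Icc 1 i, w n)
    (W : ℝ) (hW : W = C N) :
    ∀ q ∈ Icc 1 d,
      |(∑ i ∈ (Icc 1 N).filter (fun i => ⌈(d : ℝ) * C i / W⌉ = (q : ℤ)), w i)
        - W / d| < 2 * wmax := by
  classical
  have hwmax : 0 < wmax := by
    obtain ⟨j, hj, hje⟩ := hmem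
    exact hje ▸ hw j hj
  have hdR : (0:ℝ) < (d:ℝ) := by exact_mod_cast hd
  have hmono : ∀ i j : ℕ, i ≤ j → j ≤ N → C i ≤ C j := by
    intro i j hij hjN
    rw [hC, hC]
    apply Finset.sum_le_sum_of_subset_of_nonneg
    · exact Icc_subset_Icc_right hij
    · intro n hn _
      have := mem_Icc.mp hn
      exact le_of_lt (hw n (mem_Icc.mpr ⟨this.1, le_trans this.2 hjN⟩))
  have hC0 : C 0 = 0 := by rw [hC]; simp
  have hWpos : 0 < W := by
    rw [hW, hC]
    exact Finset.sum_pos hw ⟨1, mem_Icc.mpr ⟨le_refl 1, hN⟩⟩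
  -- equivalence of the two conditions
  have hiff : ∀ (x : ℝ) (k : ℤ), ((d:ℝ) * x / W ≤ (k:ℝ) ↔ x ≤ (k:ℝ) * W / d) := by
    intro x k
    rw [div_le_iff₀ hWpos, le_div_iff₀ hdR]
    constructor <;> intro h <;> nlinarith
  -- key lemma about prefix sums of the "≤ k" filter
  have key : ∀ k : ℤ, 0 ≤ k → k ≤ (d:ℤ) →
      (k:ℝ) * W / d - wmax <
        (∑ i ∈ (Icc 1 N).filter (fun i => ⌈(d : ℝ) * C i / W⌉ ≤ k), w i)
      ∧ (∑ i ∈ (Icc 1 N).filter (fun i => ⌈(d : ℝ) * C i / W⌉ ≤ k), w i)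
        ≤ (k:ℝ) * W / d := by
    intro k hk0 hkd
    have hkR : (0:ℝ) ≤ (k:ℝ) := by exact_mod_cast hk0
    set P : ℕ → Prop := fun i => C i ≤ (k:ℝ) * W / d with hP
    have hP0 : P 0 := by
      simp only [hP, hC0]
      positivity
    set m := Nat.findGreatest P N with hm
    have hPm : P m := Nat.findGreatest_spec (Nat.zero_le N) hP0
    have hmN : m ≤ N := Nat.findGreatest_le N
    have hfe : (Icc 1 N).filter (fun i => ⌈(d : ℝ) * C i / W⌉ ≤ k) = Icc 1 m := by
      ext i
      simp only [mem_filter, mem_Icc]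
      constructor
      · rintro ⟨⟨h1, h2⟩, h3⟩
        refine ⟨h1, Nat.le_findGreatest h2 ?_⟩
        exact (hiff (C i) k).mp (Int.ceil_le.mp h3)
      · rintro ⟨h1, h2⟩
        refine ⟨⟨h1, le_trans h2 hmN⟩, ?_⟩
        exact Int.ceil_le.mpr ((hiff (C i) k).mpr (le_trans (hmono i m h2 hmN) hPm))
    rw [hfe, ← hC m]
    refine ⟨?_, hPm⟩
    rcases lt_or_eq_of_le hmN with hlt | heq
    · have hnP : ¬ P (m + 1) :=
        Nat.findGreatest_is_greatest (Nat.lt_succ_self m) hlt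
      have hCs : C (m + 1) = C m + w (m + 1) := by
        rw [hC, hC, Finset.sum_Icc_succ_top (Nat.succ_le_succ (Nat.zero_le m))]
      have hwm : w (m + 1) ≤ wmax :=
        hmax (m + 1) (mem_Icc.mpr ⟨Nat.succ_le_succ (Nat.zero_le m), hlt⟩)
      have : ¬ (C (m+1) ≤ (k:ℝ) * W / d) := hnP
      push_neg at this
      linarith
    · have hCm : C m = W := by rw [heq, hW]
      have hkW : (k:ℝ) * W / d ≤ W := by
        have hkd' : (k:ℝ) ≤ (d:ℝ) := by exact_mod_cast hkd
        rw [div_le_iff₀ hdR]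
        nlinarith
      linarith
  intro q hq
  obtain ⟨hq1, hqd⟩ := mem_Icc.mp hq
  have h1 := key (q:ℤ) (by positivity) (by exact_mod_cast hqd)
  have hq1' : (1:ℤ) ≤ (q:ℤ) := by exact_mod_cast hq1
  have hqd' : (q:ℤ) ≤ (d:ℤ) := by exact_mod_cast hqd
  have h2 := key ((q:ℤ) - 1) (by omega) (by omega)
  have hA : ((Icc 1 N).filter (fun i => ⌈(d : ℝ) * C i / W⌉ ≤ (q:ℤ))).filter
      (fun i => ⌈(d : ℝ) * C i / W⌉ ≤ (q:ℤ) - 1)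
      = (Icc 1 N).filter (fun i => ⌈(d : ℝ) * C i / W⌉ ≤ (q:ℤ) - 1) := by
    rw [filter_filter]
    exact filter_congr (fun i _ => by omega)
  have hB : ((Icc 1 N).filter (fun i => ⌈(d : ℝ) * C i / W⌉ ≤ (q:ℤ))).filter
      (fun i => ¬ (⌈(d : ℝ) * C i / W⌉ ≤ (q:ℤ) - 1))
      = (Icc 1 N).filter (fun i => ⌈(d : ℝ) * C i / W⌉ = (q:ℤ)) := by
    rw [filter_filter]
    exact filter_congr (fun i _ => by omega)
  have hsplit : (∑ i ∈ (Icc 1 N).filter (fun i => ⌈(d : ℝ) * C i / W⌉ ≤ (q:ℤ) - 1), w i)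
      + (∑ i ∈ (Icc 1 N).filter (fun i => ⌈(d : ℝ) * C i / W⌉ = (q : ℤ)), w i)
      = (∑ i ∈ (Icc 1 N).filter (fun i => ⌈(d : ℝ) * C i / W⌉ ≤ (q:ℤ)), w i) := by
    rw [← hA, ← hB, Finset.sum_filter_add_sum_filter_not]
  push_cast at h1 h2
  have hid : (q:ℝ) * W / d - ((q:ℝ) - 1) * W / d = W / d := by ring
  rw [abs_lt]
  constructor <;> linarith [h1.1, h1.2, h2.1, h2.2]
end

section
/- Under the prefix-sum partition assignment q(i) = ⌈d·C_i/W⌉ with positive weights, the load of partition q equals C_{j_q} − C_{j_{q-1}}, where j_q = max{i : q(i) ≤ q} (with j_0 = 0, C_0 = 0); moreover C_{j_q} ≤ qW/d + w_max and C_{j_q} > qW/d − w_max for each q ∈ {1,...,d−1}. -/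
open Finset

/-- With the prefix-sum assignment `Q i = ⌈d * C i / W⌉` and
`J q = max {i : Q i ≤ q}` (`J 0 = 0`, `C 0 = 0`), the load of partition `q`
equals `C (J q) - C (J (q-1))`; moreover for `q ∈ {1,…,d-1}` we have
`C (J q) ≤ q W / d + wmax` and `C (J q) > q W / d - wmax`. -/
theorem prefix_sum_partition_load_formula
    (N d : ℕ) (hN : 0 < N) (hd : 0 < d) (w : ℕ → ℝ)
    (hw : ∀ j ∈ Icc 1 N, 0 < w j)
    (wmax : ℝ) (hmax : ∀ j ∈ Icc 1 N, w j ≤ wmax)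
    (hmem : ∃ j ∈ Icc 1 N, w j = wmax)
    (C : ℕ → ℝ) (hC : ∀ i, C i = ∑ n ∈ Icc 1 i, w n)
    (W : ℝ) (hW : W = C N)
    (Q : ℕ → ℤ) (hQ : ∀ i, Q i = ⌈(d : ℝ) * C i / W⌉)
    (J : ℕ → ℕ) (hJ : ∀ q, J q = ((Icc 1 N).filter (fun i => Q i ≤ (q : ℤ))).sup id) :
    (∀ q ∈ Icc 1 d,
      ∑ i ∈ (Icc 1 N).filter (fun i => Q i = (q : ℤ)), w i
        = C (J q) - C (J (q - 1))) ∧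
    (∀ q ∈ Icc 1 (d - 1),
      C (J q) ≤ (q : ℝ) * W / d + wmax ∧ (q : ℝ) * W / d - wmax < C (J q)) := by
  have h1N : (1:ℕ) ∈ Icc 1 N := mem_Icc.mpr ⟨le_refl 1, hN⟩
  have hW0 : 0 < W := by
    rw [hW, hC]
    exact Finset.sum_pos (fun j hj => hw j hj) ⟨1, h1N⟩
  have hd0 : (0:ℝ) < d := by exact_mod_cast hd
  have hwmax0 : 0 < wmax := by
    obtain ⟨j, hj, hje⟩ := hmem
    rw [← hje]; exact hw j hj
  have hCmono : ∀ i j, i ≤ j → j ≤ N → C i ≤ C j := by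
    intro i j hij hjN
    rw [hC, hC]
    apply Finset.sum_le_sum_of_subset_of_nonneg (Finset.Icc_subset_Icc_right hij)
    intro k hk _
    exact le_of_lt (hw k (by simp only [mem_Icc] at hk ⊢; omega))
  have hQmono : ∀ i j, i ≤ j → j ≤ N → Q i ≤ Q j := by
    intro i j hij hjN
    rw [hQ, hQ]
    apply Int.ceil_le_ceil
    have := hCmono i j hij hjN
    gcongr
  have hJle : ∀ q, J q ≤ N := by
    intro q
    rw [hJ]
    apply Finset.sup_le
    intro i hi
    simp only [mem_filter, mem_Icc] at hi
    exact hi.1.2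
  have hiff : ∀ (q : ℕ), ∀ i ∈ Icc 1 N, (Q i ≤ (q:ℤ) ↔ i ≤ J q) := by
    intro q i hi
    constructor
    · intro h
      rw [hJ]
      exact Finset.le_sup (f := id) (mem_filter.mpr ⟨hi, h⟩)
    · intro h
      rcases Finset.eq_empty_or_nonempty ((Icc 1 N).filter (fun i => Q i ≤ (q:ℤ))) with he | hne
      · rw [hJ, he] at h
        simp only [Finset.sup_empty, Nat.bot_eq_zero] at h
        have h1 := (mem_Icc.mp hi).1
        omega
      · obtain ⟨m, hm, hms⟩ := Finset.exists_mem_eq_sup _ hne id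
        have hms' : J q = m := by rw [hJ, hms]; rfl
        simp only [mem_filter, mem_Icc] at hm
        calc Q i ≤ Q (J q) := hQmono i (J q) h (hJle q)
          _ = Q m := by rw [hms']
          _ ≤ q := hm.2
  have hJmono : ∀ a b : ℕ, a ≤ b → J a ≤ J b := by
    intro a b hab
    rw [hJ, hJ]
    apply Finset.sup_mono
    apply Finset.monotone_filter_right
    intro i _ hi
    exact le_trans hi (by exact_mod_cast hab)
  have hsum : ∀ a b : ℕ, a ≤ b → ∑ i ∈ Ioc a b, w i = C b - C a := by
    intro a b hab
    have h0 : ∀ x : ℕ, C x = ∑ i ∈ Ioc 0 x, w i := by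
      intro x
      rw [hC, show (1:ℕ) = 0 + 1 from rfl, Finset.Icc_add_one_left_eq_Ioc]
    have := Finset.sum_Ioc_consecutive w (Nat.zero_le a) hab
    rw [h0 a, h0 b]
    linarith
  constructor
  · intro q hq
    simp only [mem_Icc] at hq
    have hq1 : 1 ≤ q := hq.1
    have hcast : ((q-1:ℕ):ℤ) = (q:ℤ) - 1 := by omega
    have hfe : (Icc 1 N).filter (fun i => Q i = (q:ℤ)) = Ioc (J (q-1)) (J q) := by
      ext i
      simp only [mem_filter, mem_Ioc]
      constructor
      · rintro ⟨hi, hQi⟩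
        have h1 : i ≤ J q := (hiff q i hi).mp (le_of_eq hQi)
        have h2 : ¬ (i ≤ J (q-1)) := by
          intro hle
          have := (hiff (q-1) i hi).mpr hle
          omega
        omega
      · rintro ⟨h1, h2⟩
        have hiN : i ∈ Icc 1 N := mem_Icc.mpr ⟨by omega, le_trans h2 (hJle q)⟩
        refine ⟨hiN, ?_⟩
        have hle : Q i ≤ (q:ℤ) := (hiff q i hiN).mpr h2
        have hgt : ¬ Q i ≤ ((q-1:ℕ):ℤ) := by
          intro hc
          have := (hiff (q-1) i hiN).mp hc
          omega
        omega
    rw [hfe, hsum _ _ (hJmono (q-1) q (by omega))]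
  · intro q hq
    simp only [mem_Icc] at hq
    have hq1 : 1 ≤ q := hq.1
    have hqltd : q < d := by omega
    rcases Finset.eq_empty_or_nonempty ((Icc 1 N).filter (fun i => Q i ≤ (q:ℤ))) with he | hne
    · have hJ0 : J q = 0 := by rw [hJ, he]; rfl
      have hC0 : C 0 = 0 := by rw [hC]; simp
      have hQ1 : ¬ Q 1 ≤ (q:ℤ) := by
        intro hc
        have : (1:ℕ) ∈ (Icc 1 N).filter (fun i => Q i ≤ (q:ℤ)) := mem_filter.mpr ⟨h1N, hc⟩
        rw [he] at this
        exact absurd this (Finset.notMem_empty 1)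
      have hg : (q:ℝ) < (d:ℝ) * C 1 / W := by
        by_contra hcon
        push_neg at hcon
        refine hQ1 ?_
        rw [hQ]
        exact Int.ceil_le.mpr (by exact_mod_cast hcon)
      have hC1 : C 1 = w 1 := by rw [hC]; simp
      have hW1 : (q:ℝ) * W / d < wmax := by
        have hw1 : C 1 ≤ wmax := by rw [hC1]; exact hmax 1 h1N
        rw [div_lt_iff₀ hd0]
        have h2 := (lt_div_iff₀ hW0).mp hg
        nlinarith
      rw [hJ0, hC0]
      have hpos : 0 ≤ (q:ℝ) * W / d := by positivity
      constructor <;> linarith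
    · obtain ⟨m, hm, hms⟩ := Finset.exists_mem_eq_sup _ hne id
      have hJm : J q = m := by rw [hJ, hms]; rfl
      simp only [mem_filter, mem_Icc] at hm
      have hQm : Q m ≤ (q:ℤ) := hm.2
      rw [hQ] at hQm
      have hub : C m ≤ (q:ℝ) * W / d := by
        have h := Int.ceil_le.mp hQm
        push_cast at h
        have h2 := (div_le_iff₀ hW0).mp h
        rw [le_div_iff₀ hd0]
        nlinarith
      have hmN : m < N := by
        rcases lt_or_eq_of_le hm.1.2 with h | h
        · exact h
        · exfalso
          rw [h, ← hW, mul_div_assoc, div_self (ne_of_gt hW0), mul_one] at hQm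
          have : ((d:ℕ):ℤ) ≤ (q:ℤ) := by
            calc ((d:ℕ):ℤ) = ⌈((d:ℕ):ℝ)⌉ := (Int.ceil_natCast d).symm
              _ ≤ (q:ℤ) := hQm
          omega
      have hnm : m + 1 ∉ (Icc 1 N).filter (fun i => Q i ≤ (q:ℤ)) := by
        intro hc
        have h1 : m + 1 ≤ J q := by
          rw [hJ]
          exact Finset.le_sup (f := id) hc
        omega
      have hm1mem : m + 1 ∈ Icc 1 N := mem_Icc.mpr ⟨by omega, by omega⟩
      have hQm1 : ¬ Q (m+1) ≤ (q:ℤ) := fun hc => hnm (mem_filter.mpr ⟨hm1mem, hc⟩)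
      rw [hQ] at hQm1
      have hgt : (q:ℝ) < (d:ℝ) * C (m+1) / W := by
        by_contra hcon
        push_neg at hcon
        exact hQm1 (Int.ceil_le.mpr (by exact_mod_cast hcon))
      have hCm1 : C (m+1) = C m + w (m+1) := by
        rw [hC, hC, Finset.sum_Icc_succ_top (by omega)]
      have hwle : w (m+1) ≤ wmax := hmax _ hm1mem
      have hlow : (q:ℝ) * W / d - wmax < C m := by
        have h2 : (q:ℝ) * W < d * C (m+1) := (lt_div_iff₀ hW0).mp hgt
        have h3 : (q:ℝ) * W / d < C (m+1) := by
          rw [div_lt_iff₀ hd0]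
          nlinarith
        linarith
      rw [hJm]
      exact ⟨by linarith, hlow⟩
end
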